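/- For r, s ≥ 1, the value of the Nekrasov factor N_{(r^s),∅}(Q^{-1}) at Q = q^r t^{-s} equals ∏_{-r ≤ i ≤ -1, -s ≤ j ≤ -1} (1 - q^i t^{-j}). -/

import Mathlib

open Finset Filter

/-- Length of column `j+1` of the Young diagram of `p` (rows 0-indexed). -/
noncomputable def conjP (p : ℕ → ℕ) (j : ℕ) : ℕ := Nat.card {i : ℕ | j < p i}

/-- The Nekrasov factor `N_{λ,μ}(Q)`; rows are 0-indexed, so `l i` is the
`(i+1)`-st row of `λ`.  It equals
`∏_{(i,j)∈μ} (1 - Q q^{λ_i - j} t^{μ'_j - i + 1}) ·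
 ∏_{(i,j)∈λ} (1 - Q q^{-μ_i + j - 1} t^{-λ'_j + i})` (1-indexed boxes). -/
noncomputable def Nfac (q t Q : ℂ) (l m : ℕ → ℕ) : ℂ :=
  (∏ᶠ i : ℕ, ∏ j ∈ Finset.range (m i),
    (1 - Q * q ^ ((l i : ℤ) - ((j : ℤ) + 1)) * t ^ ((conjP m j : ℤ) - (i : ℤ)))) *
  (∏ᶠ i : ℕ, ∏ j ∈ Finset.range (l i),
    (1 - Q * q ^ (-(m i : ℤ) + (j : ℤ)) * t ^ (-(conjP l j : ℤ) + (i : ℤ) + 1)))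

/-- The Nekrasov summand
`Z_{λ,μ}(Q,q,t) = 1/(N_{λ,λ}(1) N_{μ,μ}(1) N_{λ,μ}(Q) N_{μ,λ}(Q⁻¹))`. -/
noncomputable def Zlm (q t Q : ℂ) (l m : ℕ → ℕ) : ℂ :=
  1 / (Nfac q t 1 l l * Nfac q t 1 m m * Nfac q t Q l m * Nfac q t Q⁻¹ m l)

/-- `p : ℕ → ℕ` is a partition: antitone with finite support. -/
def IsPartition (p : ℕ → ℕ) : Prop :=
  (∀ i j : ℕ, i ≤ j → p j ≤ p i) ∧ {i | p i ≠ 0}.Finite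

/-- The rectangular partition `(r^s)`: `s` rows of length `r`. -/
def rect (r s : ℕ) : ℕ → ℕ := fun i => if i < s then r else 0

/-- The single-box partition `(1)`. -/
def oneBox : ℕ → ℕ := fun i => if i = 0 then 1 else 0

/-- The empty partition. -/
def emptyP : ℕ → ℕ := fun _ => 0

/-- `G(r,s;q,t) = -sgn(r) q^r t^{-s}
∏_{-|r| ≤ i ≤ |r|-1, -|s| ≤ j ≤ |s|-1, (i,j)≠(0,0)} (1 - q^i t^{-j})^{-1}`. -/
noncomputable def Gfun (q t : ℂ) (r s : ℤ) : ℂ :=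
  -(if 0 < r then (1 : ℂ) else -1) * q ^ r * t ^ (-s) *
    ∏ i ∈ Finset.Icc (-|r|) (|r| - 1), ∏ j ∈ Finset.Icc (-|s|) (|s| - 1),
      (if i = 0 ∧ j = 0 then 1 else (1 - q ^ i * t ^ (-j))⁻¹)

/-! With `μ = ∅` only the product over the boxes of `λ = (r^s)` survives, and every column of
the rectangle has length `s`, so after substituting `Q = q^r t^{-s}` the box in row `i`,
column `j` (0-indexed) contributes `1 - q^{j-r} t^{i+1}`. Reindexing by `j ↦ j - r` and
`i ↦ -i - 1` turns this into the stated product. -/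

lemma conjP_rect {r s j : ℕ} (hj : j < r) : conjP (rect r s) j = s := by
  have : {i : ℕ | j < rect r s i} = Set.Iio s := by
    ext i; by_cases h : i < s <;> simp [rect, h, hj]
  rw [conjP, this]
  simp

lemma Nfac_emptyP_right (q t Q : ℂ) (l : ℕ → ℕ) :
    Nfac q t Q l emptyP = ∏ᶠ i : ℕ, ∏ j ∈ range (l i),
      (1 - Q * q ^ (j : ℤ) * t ^ (-(conjP l j : ℤ) + i + 1)) := by
  simp [Nfac, emptyP]

lemma finprod_prod_range_rect {M : Type*} [CommMonoid M] (r s : ℕ) (f : ℕ → ℕ → M) :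
    ∏ᶠ i : ℕ, ∏ j ∈ range (rect r s i), f i j = ∏ i ∈ range s, ∏ j ∈ range r, f i j := by
  have hsupp : Function.mulSupport (fun i => ∏ j ∈ range (rect r s i), f i j) ⊆ range s := by
    intro i hi
    by_contra hs
    simp [rect, mem_range.not.mp hs] at hi
  rw [finprod_eq_prod_of_mulSupport_subset _ hsupp]
  exact prod_congr rfl fun i hi => by simp_all [rect]

lemma prod_Icc_neg_eq_prod_range_sub {M : Type*} [CommMonoid M] (f : ℤ → M) (n : ℕ) :
    ∏ i ∈ Icc (-(n : ℤ)) (-1), f i = ∏ k ∈ range n, f (k - n) := by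
  refine prod_nbij' (fun i => (i + n).toNat) (fun k => k - n) ?_ ?_ ?_ ?_ ?_ <;>
    intro i hi <;> simp only [mem_Icc, mem_range] at hi ⊢
  all_goals first | omega | (congr 1; omega)

lemma prod_Icc_neg_eq_prod_range_neg {M : Type*} [CommMonoid M] (f : ℤ → M) (n : ℕ) :
    ∏ i ∈ Icc (-(n : ℤ)) (-1), f i = ∏ k ∈ range n, f (-k - 1) := by
  refine prod_nbij' (fun i => (-i - 1).toNat) (fun k => -k - 1) ?_ ?_ ?_ ?_ ?_ <;>
    intro i hi <;> simp only [mem_Icc, mem_range] at hi ⊢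
  all_goals first | omega | (congr 1; omega)

theorem stmt_4_general (q t : ℂ) (hq : q ≠ 0) (ht : t ≠ 0) (r s : ℕ) :
    Nfac q t ((q ^ (r : ℤ) * t ^ (-(s : ℤ)))⁻¹) (rect r s) emptyP
      = ∏ i ∈ Finset.Icc (-(r : ℤ)) (-1), ∏ j ∈ Finset.Icc (-(s : ℤ)) (-1),
          (1 - q ^ i * t ^ (-j)) := by
  rw [Nfac_emptyP_right, finprod_prod_range_rect, prod_Icc_neg_eq_prod_range_sub,
    Finset.prod_comm]
  refine prod_congr rfl fun i hi => ?_
  rw [prod_Icc_neg_eq_prod_range_neg]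
  refine prod_congr rfl fun j _ => ?_
  rw [conjP_rect (mem_range.mp hi), neg_sub', sub_neg_eq_add, neg_neg, zpow_sub₀ hq,
    zpow_add_one₀ ht, zpow_add_one₀ ht, zpow_add₀ ht, zpow_neg]
  field_simp

/-- The value of `N_{(r^s),∅}(Q⁻¹)` at `Q = q^r t^{-s}` equals
`∏_{-r≤i≤-1, -s≤j≤-1} (1 - q^i t^{-j})`. -/
theorem stmt_4 (q t : ℂ) (hq : q ≠ 0) (ht : t ≠ 0) (r s : ℕ)
    (hr : 1 ≤ r) (hs : 1 ≤ s) :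
    Nfac q t ((q ^ (r : ℤ) * t ^ (-(s : ℤ)))⁻¹) (rect r s) emptyP
      = ∏ i ∈ Finset.Icc (-(r : ℤ)) (-1), ∏ j ∈ Finset.Icc (-(s : ℤ)) (-1),
          (1 - q ^ i * t ^ (-j)) :=
  stmt_4_general q t hq ht r s
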